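/- arXiv:2004.11998 — 2 statements merged into one kernel-verified Lean document; each statement's English description precedes it below -/
import Mathlib

section
/- Let w = (w_1,…,w_n) ∈ {0,1}^n be a binary word of length n ≥ 1 (ordered 0 < 1) whose C-orbit is free, i.e., the n cyclic shifts w, c(w), c^2(w), …, c^{n−1}(w) are pairwise distinct. Then in ℤ[t] one has the congruence Σ_{j=0}^{n−1} t^{inv(c^j(w))} ≡ t^{inv(w)} · Σ_{j=0}^{n−1} t^{j·wt(w)} (mod t^n − 1). -/
/-- The (leftward) cyclic shift on words of length `n`:
`c(w₁,…,wₙ) = (w₂,…,wₙ,w₁)`. -/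
def cshift {A : Type*} {n : ℕ} (w : Fin n → A) : Fin n → A :=
  fun i => w ⟨((i : ℕ) + 1) % n, Nat.mod_lt _ i.pos⟩

/-- The major index of a word: `maj w = Σ_{1 ≤ i ≤ n-1, w_i > w_{i+1}} i`
(here positions are 0-indexed, so position `i : Fin n` is the `(i+1)`-st letter). -/
def majIdx {A : Type*} [LinearOrder A] {n : ℕ} (w : Fin n → A) : ℕ :=
  ∑ i : Fin n,
    if h : (i : ℕ) + 1 < n then (if w ⟨(i : ℕ) + 1, h⟩ < w i then (i : ℕ) + 1 else 0) else 0

/-- The number of cyclic descents of a word, `cdes w = #{i : w_i > w_{i+1}}`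
with indices read cyclically (`w_{n+1} := w_1`). -/
def cdes {A : Type*} [LinearOrder A] {n : ℕ} (w : Fin n → A) : ℕ :=
  (Finset.univ.filter fun i : Fin n =>
    w ⟨((i : ℕ) + 1) % n, Nat.mod_lt _ i.pos⟩ < w i).card

/-- The inversion number of a word: `inv w = #{(i,j) : i < j, w_i > w_j}`. -/
def invNum {A : Type*} [LinearOrder A] {n : ℕ} (w : Fin n → A) : ℕ :=
  (Finset.univ.filter fun p : Fin n × Fin n => p.1 < p.2 ∧ w p.2 < w p.1).card

/-- The Hamming weight of a binary word: the number of ones. -/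
def wt {n : ℕ} (w : Fin n → Bool) : ℕ :=
  (Finset.univ.filter fun i => w i = true).card

/-- The triple `(X, Σ_{x ∈ X} t^{stat x}, C)` exhibits the cyclic sieving phenomenon,
where `C` is the cyclic group of order `n` generated by the cyclic shift `c` acting on `X`:
for every `d`, the number of fixed points of `c^d` on `X` equals the evaluation of
`Σ_{x ∈ X} t^{stat x}` at `t = ζ^d`, with `ζ = exp(2πi/n)`. -/
def exhibitsCSP {A : Type*} [DecidableEq A] {n : ℕ} (X : Finset (Fin n → A))
    (stat : (Fin n → A) → ℕ) : Prop :=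
  ∀ d : ℕ,
    ((X.filter fun v => cshift^[d] v = v).card : ℂ) =
      ∑ v ∈ X, Complex.exp (2 * (Real.pi : ℂ) * Complex.I / n) ^ (d * stat v)

/-!
Move the first letter of a binary word `w` of length `n` to the end. A leading `0` gains an
inversion with each of the `wt w` ones; a leading `1` loses its inversions with the `n - wt w`
zeros. Either way `inv (c w) ≡ inv w + wt w (mod n)`, so `inv (c^j w) ≡ inv w + j · wt w (mod n)`,
and since `t^n - 1 ∣ t^a - t^b` whenever `a ≡ b (mod n)` the congruence holds term by term.
-/

open Finset Polynomial

section Words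

variable {A : Type*} {n : ℕ}

lemma cshift_eq_comp_finRotate (w : Fin n → A) : cshift w = w ∘ finRotate n := by
  cases n with
  | zero => funext i; exact i.elim0
  | succ m =>
    funext i
    simp only [cshift, Function.comp_apply, finRotate_apply]
    congr 1
    ext
    simp [Fin.val_add, Nat.add_mod]

lemma cshift_cons (x : A) (v : Fin n → A) :
    cshift (Fin.cons x v : Fin (n + 1) → A) = Fin.snoc v x := by
  rw [cshift_eq_comp_finRotate, Fin.snoc_eq_cons_rotate]
  rfl

variable [LinearOrder A]

lemma invNum_eq_sum (w : Fin n → A) :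
    invNum w = ∑ i, ∑ j, if i < j ∧ w j < w i then 1 else 0 := by
  rw [invNum, card_filter, Fintype.sum_prod_type]

lemma invNum_cons (x : A) (v : Fin n → A) :
    invNum (Fin.cons x v : Fin (n + 1) → A) = #{i | v i < x} + invNum v := by
  rw [invNum_eq_sum, invNum_eq_sum, card_filter]
  simp [Fin.sum_univ_succ, Fin.succ_lt_succ_iff, -sum_boole]

lemma invNum_snoc (v : Fin n → A) (x : A) :
    invNum (Fin.snoc v x : Fin (n + 1) → A) = invNum v + #{i | x < v i} := by
  rw [invNum_eq_sum, invNum_eq_sum, card_filter]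
  simp [Fin.sum_univ_castSucc, sum_add_distrib, (Fin.castSucc_lt_last _).not_gt, -sum_boole]

end Words

section Binary

variable {n : ℕ}

lemma wt_cons (x : Bool) (v : Fin n → Bool) :
    wt (Fin.cons x v : Fin (n + 1) → Bool) = x.toNat + wt v := by
  cases x <;> simp [wt, Fin.card_filter_univ_succ']

lemma card_filter_lt_true_add_wt (v : Fin n → Bool) : #{i | v i < true} + wt v = n := by
  have h := card_filter_add_card_filter_not (s := univ) (fun i => v i = true)
  simp only [card_univ, Fintype.card_fin, Bool.not_eq_true] at h
  simpa [wt, Bool.lt_iff, add_comm] using h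

lemma card_filter_false_lt (v : Fin n → Bool) : #{i | false < v i} = wt v := by
  simp [wt, Bool.lt_iff]

lemma invNum_cshift_add (w : Fin (n + 1) → Bool) :
    invNum (cshift w) + (n + 1) * (w 0).toNat = invNum w + wt w := by
  obtain ⟨x, v, rfl⟩ : ∃ x v, w = Fin.cons x v := ⟨w 0, Fin.tail w, (Fin.cons_self_tail w).symm⟩
  have hlt := card_filter_lt_true_add_wt v
  rw [cshift_cons, invNum_snoc, invNum_cons, wt_cons, Fin.cons_zero]
  cases x
  · simp [card_filter_false_lt]
  · simp [show ∀ b : Bool, ¬true < b by decide]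
    omega

lemma invNum_cshift_modEq (w : Fin n → Bool) : invNum (cshift w) ≡ invNum w + wt w [MOD n] := by
  cases n with
  | zero => simp [Nat.ModEq, invNum, wt]
  | succ m => rw [Nat.ModEq, ← invNum_cshift_add, Nat.add_mul_mod_self_left]

lemma wt_cshift (w : Fin n → Bool) : wt (cshift w) = wt w := by
  rw [cshift_eq_comp_finRotate, wt, wt]
  exact card_equiv (finRotate n) (by simp)

lemma wt_iterate_cshift (w : Fin n → Bool) (j : ℕ) : wt (cshift^[j] w) = wt w := by
  induction j with
  | zero => rfl
  | succ j ih => rw [Function.iterate_succ_apply', wt_cshift, ih]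

lemma invNum_iterate_cshift_modEq (w : Fin n → Bool) (j : ℕ) :
    invNum (cshift^[j] w) ≡ invNum w + j * wt w [MOD n] := by
  induction j with
  | zero => simp [Nat.ModEq]
  | succ j ih =>
    rw [Function.iterate_succ_apply']
    calc invNum (cshift (cshift^[j] w))
        ≡ invNum (cshift^[j] w) + wt (cshift^[j] w) [MOD n] := invNum_cshift_modEq _
      _ = invNum (cshift^[j] w) + wt w := by rw [wt_iterate_cshift]
      _ ≡ invNum w + j * wt w + wt w [MOD n] := ih.add_right _
      _ = invNum w + (j + 1) * wt w := by ring

end Binary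

lemma pow_sub_one_dvd_pow_sub_pow_of_modEq {R : Type*} [CommRing R] (x : R) {n a b : ℕ}
    (h : a ≡ b [MOD n]) : x ^ n - 1 ∣ x ^ a - x ^ b := by
  wlog hba : b ≤ a generalizing a b
  · exact dvd_sub_comm.mp (this h.symm (by omega))
  obtain ⟨k, rfl⟩ := Nat.exists_eq_add_of_le hba
  have hk : n ∣ k := Nat.modEq_zero_iff_dvd.mp (Nat.ModEq.add_left_cancel' b (by simpa using h))
  rw [pow_add, ← mul_sub_one]
  exact dvd_mul_of_dvd_right (dvd_pow_sub_one_of_dvd hk) _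

theorem stmt6_general {n : ℕ} (w : Fin n → Bool) :
    ((Polynomial.X : Polynomial ℤ) ^ n - 1) ∣
      ((∑ j ∈ Finset.range n, (Polynomial.X : Polynomial ℤ) ^ invNum (cshift^[j] w)) -
        Polynomial.X ^ invNum w *
          ∑ j ∈ Finset.range n, (Polynomial.X : Polynomial ℤ) ^ (j * wt w)) := by
  rw [mul_sum, ← sum_sub_distrib]
  refine dvd_sum fun j _ => ?_
  rw [← pow_add]
  exact pow_sub_one_dvd_pow_sub_pow_of_modEq X (invNum_iterate_cshift_modEq w j)

/-- if the C-orbit of a binary word w is free, then in ℤ[t] one has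
Σ_{j=0}^{n-1} t^{inv(c^j(w))} ≡ t^{inv w} · Σ_{j=0}^{n-1} t^{j·wt w}  (mod t^n - 1). -/
theorem stmt6 {n : ℕ} (hn : 1 ≤ n) (w : Fin n → Bool)
    (hfree : ∀ i j : Fin n, cshift^[(i : ℕ)] w = cshift^[(j : ℕ)] w → i = j) :
    ((Polynomial.X : Polynomial ℤ) ^ n - 1) ∣
      ((∑ j ∈ Finset.range n, (Polynomial.X : Polynomial ℤ) ^ invNum (cshift^[j] w)) -
        Polynomial.X ^ invNum w *
          ∑ j ∈ Finset.range n, (Polynomial.X : Polynomial ℤ) ^ (j * wt w)) :=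
  stmt6_general w
end

section
/- Let n ≥ 1, let A be a linearly ordered alphabet, and let X ⊆ A^n be a finite subset stable under the cyclic shift c. Suppose there is a non-constant word w ∈ X whose C-orbit is free (its n cyclic shifts are pairwise distinct) and such that every non-constant word of X lies in the C-orbit of w; thus X consists of some constant words together with this single free orbit. Then (X, X^maj(t), C) exhibits the cyclic sieving phenomenon if and only if gcd(n, cdes(w)) = 1. -/
open Finset Function

lemma cshift_of_forall_eq {A : Type*} {n : ℕ} {v : Fin n → A} (hv : ∀ i j, v i = v j) :
    cshift v = v :=
  funext fun _ => hv _ _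

section Shift

variable {A : Type*} {n : ℕ} [NeZero n]

lemma Fin.mk_succ_mod_eq_add_one (i : Fin n) :
    (⟨((i : ℕ) + 1) % n, Nat.mod_lt _ i.pos⟩ : Fin n) = i + 1 := by
  ext
  simp [Fin.val_add]

lemma cshift_apply (v : Fin n → A) (i : Fin n) : cshift v i = v (i + 1) := by
  rw [cshift, Fin.mk_succ_mod_eq_add_one]

open Fin.NatCast in
lemma cshift_iterate_apply (v : Fin n → A) (k : ℕ) (i : Fin n) :
    cshift^[k] v i = v (i + k) := by
  induction k generalizing v with
  | zero => simp
  | succ k ih => rw [iterate_succ_apply, ih, cshift_apply, Nat.cast_succ, add_assoc]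

lemma isPeriodicPt_cshift (v : Fin n → A) : IsPeriodicPt cshift n v := by
  funext i
  rw [cshift_iterate_apply, Fin.natCast_self, add_zero]

lemma minimalPeriod_cshift_eq_of_injective {w : Fin n → A}
    (hfree : ∀ i j : Fin n, cshift^[(i : ℕ)] w = cshift^[(j : ℕ)] w → i = j) :
    minimalPeriod cshift w = n := by
  have hper := isPeriodicPt_cshift w
  refine le_antisymm (Nat.le_of_dvd (NeZero.pos n) hper.minimalPeriod_dvd) (not_lt.1 fun hlt => ?_)
  have h0 := hfree ⟨_, hlt⟩ ⟨0, NeZero.pos n⟩ iterate_minimalPeriod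
  exact (hper.minimalPeriod_pos (NeZero.pos n)).ne' (congrArg Fin.val h0)

end Shift

section Descents

variable {A : Type*} [LinearOrder A] {n : ℕ} [NeZero n]

-- The wrap-around position `n - 1` contributes `(n - 1 + 1 : Fin n) = 0`, as in `majIdx`.
lemma majIdx_eq_sum (v : Fin n → A) :
    majIdx v = ∑ i : Fin n, if v (i + 1) < v i then ((i + 1 : Fin n) : ℕ) else 0 := by
  refine sum_congr rfl fun i _ => ?_
  by_cases h : (i : ℕ) + 1 < n
  · have hi : (⟨(i : ℕ) + 1, h⟩ : Fin n) = i + 1 := by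
      rw [← Fin.mk_succ_mod_eq_add_one]
      simp only [Nat.mod_eq_of_lt h]
    simp [h, hi, Fin.val_add, Nat.mod_eq_of_lt h]
  · have hi : i + 1 = 0 := by
      rw [← Fin.mk_succ_mod_eq_add_one]
      ext
      simp [show (i : ℕ) + 1 = n by omega]
    simp [h, hi]

lemma cdes_eq_sum (v : Fin n → A) :
    cdes v = ∑ i : Fin n, if v (i + 1) < v i then 1 else 0 := by
  simp only [cdes, Fin.mk_succ_mod_eq_add_one, card_filter]

lemma cdes_cshift (v : Fin n → A) : cdes (cshift v) = cdes v := by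
  simp only [cdes_eq_sum, cshift_apply]
  exact Equiv.sum_comp (Equiv.addRight 1) fun i => if v (i + 1) < v i then 1 else 0

lemma cdes_iterate_cshift (v : Fin n → A) (r : ℕ) : cdes (cshift^[r] v) = cdes v := by
  induction r with
  | zero => rfl
  | succ r ih => rw [iterate_succ_apply', cdes_cshift, ih]

lemma majIdx_cshift_add_cdes (v : Fin n → A) :
    (majIdx (cshift v) + cdes v : ZMod n) = majIdx v := by
  have hrot : majIdx (cshift v) = ∑ i : Fin n, if v (i + 1) < v i then (i : ℕ) else 0 := by
    simp only [majIdx_eq_sum, cshift_apply]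
    exact Equiv.sum_comp (Equiv.addRight 1) fun i => if v (i + 1) < v i then (i : ℕ) else 0
  simp only [hrot, majIdx_eq_sum, cdes_eq_sum, Nat.cast_sum, Nat.cast_ite, Nat.cast_zero,
    Nat.cast_one, ← sum_add_distrib]
  refine sum_congr rfl fun i _ => ?_
  split_ifs <;> simp [Fin.val_add]

lemma majIdx_iterate_cshift_add (v : Fin n → A) (r : ℕ) :
    (majIdx (cshift^[r] v) + r * cdes v : ZMod n) = majIdx v := by
  induction r with
  | zero => simp
  | succ r ih =>
    rw [← ih, ← majIdx_cshift_add_cdes (cshift^[r] v), cdes_iterate_cshift, iterate_succ_apply']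
    push_cast
    ring

lemma majIdx_of_forall_eq {v : Fin n → A} (hv : ∀ i j, v i = v j) : majIdx v = 0 := by
  simp [majIdx_eq_sum, fun i : Fin n => hv (i + 1) i]

end Descents

lemma Nat.coprime_iff_forall_dvd_of_dvd_mul_right {n c : ℕ} (hn : n ≠ 0) :
    n.Coprime c ↔ ∀ d, n ∣ d * c → n ∣ d := by
  refine ⟨fun hc _ => hc.dvd_of_dvd_mul_right, fun h => ?_⟩
  have hdvd : n ∣ n / n.gcd c * c :=
    ⟨c / n.gcd c, by rw [Nat.div_mul_right_comm (Nat.gcd_dvd_left n c),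
      Nat.mul_div_assoc _ (Nat.gcd_dvd_right n c)]⟩
  have hdiv : n / n.gcd c = n :=
    (Nat.dvd_antisymm (Nat.div_dvd_of_dvd (Nat.gcd_dvd_left n c)) (h _ hdvd))
  exact (Nat.div_eq_self.1 hdiv).resolve_left hn

lemma IsPrimitiveRoot.pow_eq_pow_of_natCast_eq {M : Type*} [CommMonoid M] {ζ : M} {n : ℕ}
    (hζ : IsPrimitiveRoot ζ n) {a b : ℕ} (h : (a : ZMod n) = b) : ζ ^ a = ζ ^ b := by
  rw [← pow_mod_orderOf, ← hζ.eq_orderOf, (ZMod.natCast_eq_natCast_iff' a b n).1 h,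
    hζ.eq_orderOf, pow_mod_orderOf]

lemma geom_sum_eq_zero_of_pow_eq_one {K : Type*} [DivisionRing K] {x : K} {n : ℕ}
    (hx : x ^ n = 1) (hx1 : x ≠ 1) : ∑ i ∈ range n, x ^ i = 0 := by
  rw [geom_sum_eq hx1, hx, sub_self, zero_div]

lemma Function.injOn_range_iterate_of_minimalPeriod_eq {α : Type*} {f : α → α} {x : α} {n : ℕ}
    (h : minimalPeriod f x = n) : Set.InjOn (f^[·] x) (range n : Set ℕ) := by
  subst h
  rw [coe_range]
  exact iterate_injOn_Iio_minimalPeriod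

section Orbit

variable {A : Type*} [DecidableEq A] {n : ℕ}

def cshiftOrbit (w : Fin n → A) : Finset (Fin n → A) :=
  (range n).image (cshift^[·] w)

lemma cshiftOrbit_subset {w : Fin n → A} {X : Finset (Fin n → A)}
    (hX : ∀ v ∈ X, cshift v ∈ X) (hw : w ∈ X) : cshiftOrbit w ⊆ X := by
  have hiter : ∀ r, cshift^[r] w ∈ X := fun r => by
    induction r with
    | zero => exact hw
    | succ r ih => rw [iterate_succ_apply']; exact hX _ ih
  intro v hv
  obtain ⟨r, -, rfl⟩ := mem_image.1 hv
  exact hiter r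

lemma card_cshiftOrbit {w : Fin n → A} (hw : minimalPeriod cshift w = n) :
    #(cshiftOrbit w) = n := by
  rw [cshiftOrbit, card_image_of_injOn (injOn_range_iterate_of_minimalPeriod_eq hw), card_range]

variable [NeZero n]

lemma iterate_cshift_mem_cshiftOrbit (w : Fin n → A) (r : ℕ) : cshift^[r] w ∈ cshiftOrbit w := by
  rw [← (isPeriodicPt_cshift w).iterate_mod_apply]
  exact mem_image_of_mem _ (mem_range.2 (Nat.mod_lt _ (NeZero.pos n)))

variable {w : Fin n → A} (hw : minimalPeriod cshift w = n)
include hw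

lemma iterate_cshift_eq_self_iff {v : Fin n → A} (hv : v ∈ cshiftOrbit w) (d : ℕ) :
    cshift^[d] v = v ↔ n ∣ d := by
  obtain ⟨r, -, rfl⟩ := mem_image.1 hv
  have hwper : w ∈ periodicPts cshift := mk_mem_periodicPts (NeZero.pos n) (isPeriodicPt_cshift w)
  have hper := isPeriodicPt_iff_minimalPeriod_dvd (f := cshift) (x := cshift^[r] w) (n := d)
  rwa [minimalPeriod_apply_iterate hwper, hw] at hper

lemma card_filter_iterate_cshift_eq_self (d : ℕ) :
    #((cshiftOrbit w).filter fun v => cshift^[d] v = v) = if n ∣ d then n else 0 := by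
  split_ifs with hd
  · rw [filter_true_of_mem fun v hv => (iterate_cshift_eq_self_iff hw hv d).2 hd,
      card_cshiftOrbit hw]
  · rw [filter_false_of_mem fun v hv => mt (iterate_cshift_eq_self_iff hw hv d).1 hd, card_empty]

end Orbit

section CSP

variable {A : Type*} [LinearOrder A] {n : ℕ} [NeZero n] {w : Fin n → A}

lemma sum_cshiftOrbit_pow_majIdx (hw : minimalPeriod cshift w = n) {ζ : ℂ}
    (hζ : IsPrimitiveRoot ζ n) (d : ℕ) :
    ∑ v ∈ cshiftOrbit w, ζ ^ (d * majIdx v) =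
      ζ ^ (d * majIdx w) * if n ∣ d * cdes w then (n : ℂ) else 0 := by
  set μ := ζ ^ (d * cdes w)
  have hμ : μ ≠ 0 := pow_ne_zero _ (hζ.ne_zero (NeZero.ne n))
  have hterm : ∀ r, ζ ^ (d * majIdx (cshift^[r] w)) = ζ ^ (d * majIdx w) * μ⁻¹ ^ r := by
    intro r
    rw [inv_pow, eq_mul_inv_iff_mul_eq₀ (pow_ne_zero _ hμ), ← pow_mul, ← pow_add]
    apply hζ.pow_eq_pow_of_natCast_eq
    push_cast
    rw [← majIdx_iterate_cshift_add w r]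
    ring
  rw [cshiftOrbit, sum_image (injOn_range_iterate_of_minimalPeriod_eq hw),
    sum_congr rfl fun r _ => hterm r, ← mul_sum]
  split_ifs with hdvd
  · have hμ1 : μ = 1 := (hζ.pow_eq_one_iff_dvd _).2 hdvd
    simp [hμ1]
  · have hμn : μ⁻¹ ^ n = 1 := by
      rw [inv_pow, ← pow_mul, (hζ.pow_eq_one_iff_dvd _).2 (dvd_mul_left n _), inv_one]
    have hμ1 : μ⁻¹ ≠ 1 := inv_ne_one.2 (mt (hζ.pow_eq_one_iff_dvd _).1 hdvd)
    rw [geom_sum_eq_zero_of_pow_eq_one hμn hμ1, mul_zero]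

variable {X : Finset (Fin n → A)} (hX : ∀ v ∈ X, cshift v ∈ X) (hwX : w ∈ X)
  (horb : ∀ v ∈ X, (∃ i j, v i ≠ v j) → ∃ r : ℕ, v = cshift^[r] w)
include hX hwX horb

lemma sum_eq_card_sdiff_add_sum_cshiftOrbit {M : Type*} [AddCommMonoidWithOne M]
    (f : (Fin n → A) → M) (hf : ∀ v : Fin n → A, (∀ i j, v i = v j) → f v = 1) :
    ∑ v ∈ X, f v = #(X \ cshiftOrbit w) + ∑ v ∈ cshiftOrbit w, f v := by
  have hconst : ∀ v ∈ X \ cshiftOrbit w, f v = 1 := by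
    intro v hv
    rw [mem_sdiff] at hv
    refine hf v fun i j => by_contra fun hij => ?_
    obtain ⟨r, rfl⟩ := horb v hv.1 ⟨i, j, hij⟩
    exact hv.2 (iterate_cshift_mem_cshiftOrbit w r)
  rw [← sum_sdiff (cshiftOrbit_subset hX hwX), sum_congr rfl hconst, sum_const, nsmul_one]

theorem exhibitsCSP_majIdx_iff (hw : minimalPeriod cshift w = n) :
    exhibitsCSP X majIdx ↔ ∀ d, n ∣ d * cdes w → n ∣ d := by
  have hζ := Complex.isPrimitiveRoot_exp n (NeZero.ne n)
  have hfix (d : ℕ) : (#(X.filter fun v => cshift^[d] v = v) : ℂ) =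
      #(X \ cshiftOrbit w) + if n ∣ d then (n : ℂ) else 0 := by
    rw [natCast_card_filter, sum_eq_card_sdiff_add_sum_cshiftOrbit hX hwX horb _
      fun v hv => if_pos (iterate_fixed (cshift_of_forall_eq hv) d), ← natCast_card_filter,
      card_filter_iterate_cshift_eq_self hw]
    push_cast
    rfl
  have hsum (d : ℕ) : ∑ v ∈ X, Complex.exp (2 * Real.pi * Complex.I / n) ^ (d * majIdx v) =
      #(X \ cshiftOrbit w) + Complex.exp (2 * Real.pi * Complex.I / n) ^ (d * majIdx w) *
        if n ∣ d * cdes w then (n : ℂ) else 0 := by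
    rw [sum_eq_card_sdiff_add_sum_cshiftOrbit hX hwX horb _
      fun v hv => by rw [majIdx_of_forall_eq hv, mul_zero, pow_zero],
      sum_cshiftOrbit_pow_majIdx hw hζ]
  simp only [exhibitsCSP, hfix, hsum, add_right_inj]
  refine ⟨fun h d hdc => by_contra fun hd => ?_, fun h d => ?_⟩
  · have hd' := h d
    rw [if_neg hd, if_pos hdc, eq_comm] at hd'
    exact mul_ne_zero (pow_ne_zero _ (hζ.ne_zero (NeZero.ne n)))
      (Nat.cast_ne_zero.2 (NeZero.ne n)) hd'
  · by_cases hd : n ∣ d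
    · rw [if_pos hd, if_pos (hd.mul_right _), (hζ.pow_eq_one_iff_dvd _).2 (hd.mul_right _), one_mul]
    · rw [if_neg hd, if_neg (mt (h d) hd), mul_zero]

end CSP

theorem stmt9_general {A : Type*} [LinearOrder A] {n : ℕ} (hn : 1 ≤ n)
    (X : Finset (Fin n → A)) (hX : ∀ v ∈ X, cshift v ∈ X)
    (w : Fin n → A) (hw : w ∈ X)
    (hfree : ∀ i j : Fin n, cshift^[(i : ℕ)] w = cshift^[(j : ℕ)] w → i = j)
    (horb : ∀ v ∈ X, (∃ i j, v i ≠ v j) → ∃ r : ℕ, v = cshift^[r] w) :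
    exhibitsCSP X majIdx ↔ Nat.gcd n (cdes w) = 1 := by
  have : NeZero n := ⟨Nat.one_le_iff_ne_zero.1 hn⟩
  rw [exhibitsCSP_majIdx_iff hX hw horb (minimalPeriod_cshift_eq_of_injective hfree),
    ← Nat.coprime_iff_forall_dvd_of_dvd_mul_right (NeZero.ne n), Nat.Coprime]

/-- if a shift-stable X ⊆ A^n has all its non-constant words lying in a
single free C-orbit, represented by the word w, then (X, X^maj(t), C) exhibits
the CSP if and only if gcd(n, cdes w) = 1. -/
theorem stmt9 {A : Type*} [LinearOrder A] {n : ℕ} (hn : 1 ≤ n)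
    (X : Finset (Fin n → A)) (hX : ∀ v ∈ X, cshift v ∈ X)
    (w : Fin n → A) (hw : w ∈ X) (hnc : ∃ i j, w i ≠ w j)
    (hfree : ∀ i j : Fin n, cshift^[(i : ℕ)] w = cshift^[(j : ℕ)] w → i = j)
    (horb : ∀ v ∈ X, (∃ i j, v i ≠ v j) → ∃ r : ℕ, v = cshift^[r] w) :
    exhibitsCSP X majIdx ↔ Nat.gcd n (cdes w) = 1 :=
  stmt9_general hn X hX w hw hfree horb
end
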